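/- arXiv:1904.00467 — 10 statements merged into one kernel-verified Lean document; each statement's English description precedes it below -/
import Mathlib

section
/- Let G be a finite group of odd order and let P be a twisted subgroup of G. Then the cardinality of P divides the order of G. -/
/-- A subset `P` of a group `G` is a *twisted subgroup* if `1 ∈ P` and
`a * b * a ∈ P` whenever `a, b ∈ P`. -/
def IsTwistedSubgroup {G : Type*} [Group G] (P : Set G) : Prop :=
  (1 : G) ∈ P ∧ ∀ a ∈ P, ∀ b ∈ P, a * b * a ∈ P

/-! The subgroup `Γ ≤ G × G` generated by the pairs `(p, p⁻¹)`, `p ∈ P`, acts on `G` by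
`(a, b) • x = a * x * b⁻¹` and preserves `P`, since `(p, p⁻¹) • x = p * x * p`. When `|G|` is
odd, squaring is a bijection of `G` mapping `P` into `P`, so each element of `P` is
`(r, r⁻¹) • 1 = r ^ 2` with `r ∈ P`: the orbit of `1` is exactly `P`. Its stabiliser is
`D = {g | (g, g) ∈ Γ}`, so `|Γ| = |P| |D|`, while projecting to the first factor gives
`|Γ| = |π₁ Γ| |N|` with `N = {g | (1, g) ∈ Γ}`. As `Γ` is stable under swapping coordinates,
`(g, 1) * (1, g) = (g, g)` shows `N ≤ D`, so `|P|` divides `|π₁ Γ|`, which divides `|G|`. -/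

open MulAction Pointwise

section Sandwich

variable {G : Type*} [Group G]

abbrev sandwichAction : MulAction (G × G) G where
  smul γ x := γ.1 * x * γ.2⁻¹
  one_smul x := by simp [HSMul.hSMul]
  mul_smul γ δ x := by simp [HSMul.hSMul, mul_assoc]

attribute [local instance] sandwichAction

theorem sandwich_smul (γ : G × G) (x : G) : γ • x = γ.1 * x * γ.2⁻¹ := rfl

theorem sandwich_smul_one_eq_one_iff {γ : G × G} : γ • (1 : G) = 1 ↔ γ.1 = γ.2 := by
  rw [sandwich_smul, mul_one, mul_inv_eq_one]

theorem card_sandwich_stabilizer_one (Γ : Subgroup (G × G)) :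
    Nat.card (stabilizer Γ (1 : G)) =
      Nat.card (Γ.comap ((MonoidHom.id G).prod (MonoidHom.id G))) := by
  refine Nat.card_congr
    { toFun := fun γ => ⟨(γ : Γ).1.1, ?_⟩
      invFun := fun g => ⟨⟨(g, g), g.2⟩, sandwich_smul_one_eq_one_iff.2 rfl⟩
      left_inv := fun γ => ?_
      right_inv := fun g => rfl }
  · have h : (γ : Γ).1.1 = (γ : Γ).1.2 := sandwich_smul_one_eq_one_iff.1 γ.2
    have hγ : ((γ : Γ).1.1, (γ : Γ).1.2) ∈ Γ := (γ : Γ).2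
    rwa [← h] at hγ
  · obtain ⟨⟨⟨a, b⟩, _⟩, hab⟩ := γ
    obtain rfl : a = b := sandwich_smul_one_eq_one_iff.1 hab
    rfl

theorem card_ker_fst_comp_subtype (Γ : Subgroup (G × G)) :
    Nat.card ((MonoidHom.fst G G).comp Γ.subtype).ker =
      Nat.card (Γ.comap (MonoidHom.inr G G)) := by
  refine Nat.card_congr
    { toFun := fun γ => ⟨(γ : Γ).1.2, ?_⟩
      invFun := fun g => ⟨⟨(1, g), g.2⟩, rfl⟩
      left_inv := fun γ => ?_
      right_inv := fun g => rfl }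
  · have h : (γ : Γ).1.1 = 1 := γ.2
    have hγ : ((γ : Γ).1.1, (γ : Γ).1.2) ∈ Γ := (γ : Γ).2
    rwa [h] at hγ
  · obtain ⟨⟨⟨a, b⟩, _⟩, ha⟩ := γ
    obtain rfl : a = 1 := ha
    rfl

theorem ncard_sandwich_orbit_one_dvd_card [Finite G] (Γ : Subgroup (G × G))
    (hswap : ∀ γ ∈ Γ, γ.swap ∈ Γ) :
    (orbit Γ (1 : G)).ncard ∣ Nat.card G := by
  set ψ := (MonoidHom.fst G G).comp Γ.subtype
  set D := Γ.comap ((MonoidHom.id G).prod (MonoidHom.id G))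
  set N := Γ.comap (MonoidHom.inr G G)
  have hND : N ≤ D := fun g hg => by
    have hgg : (g, 1) * (1, g) ∈ Γ := mul_mem (hswap _ hg) hg
    simpa [D] using hgg
  have horbit : Nat.card D * (orbit Γ (1 : G)).ncard = Nat.card Γ := by
    rw [← card_sandwich_stabilizer_one, ← index_stabilizer, Subgroup.card_mul_index]
  have hfst : Nat.card N * Nat.card ψ.range = Nat.card Γ := by
    rw [← card_ker_fst_comp_subtype, ← Subgroup.index_ker, Subgroup.card_mul_index]
  have hrange : (orbit Γ (1 : G)).ncard ∣ Nat.card ψ.range := by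
    rw [← Nat.mul_dvd_mul_iff_left (Nat.card_pos (α := N)), hfst, ← horbit]
    exact mul_dvd_mul_right (Subgroup.card_dvd_of_le hND) _
  exact hrange.trans ψ.range.card_subgroup_dvd_card

def sandwichGroup (P : Set G) : Subgroup (G × G) :=
  Subgroup.closure ((fun p => (p, p⁻¹)) '' P)

theorem swap_mem_sandwichGroup {P : Set G} {γ : G × G} (hγ : γ ∈ sandwichGroup P) :
    γ.swap ∈ sandwichGroup P := by
  induction hγ using Subgroup.closure_induction with
  | mem γ hγ =>
    obtain ⟨p, hp, rfl⟩ := hγ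
    have h : (p, p⁻¹)⁻¹ ∈ sandwichGroup P :=
      inv_mem (Subgroup.subset_closure ⟨p, hp, rfl⟩)
    rwa [Prod.inv_mk, inv_inv] at h
  | one => exact one_mem _
  | mul γ δ _ _ hγ hδ => exact mul_mem hγ hδ
  | inv γ _ hγ => exact inv_mem hγ

namespace IsTwistedSubgroup

variable [Finite G] {P : Set G}

theorem smul_eq_of_mem_sandwichGroup (hP : IsTwistedSubgroup P) {γ : G × G}
    (hγ : γ ∈ sandwichGroup P) : γ • P = P := by
  suffices sandwichGroup P ≤ stabilizer (G × G) P from this hγ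
  refine (Subgroup.closure_le _).2 ?_
  rintro _ ⟨p, hp, rfl⟩
  refine Set.eq_of_subset_of_ncard_le ?_ (Set.ncard_smul_set _ _).ge P.toFinite
  rintro _ ⟨x, hx, rfl⟩
  simpa [sandwich_smul] using hP.2 p hp x hx

theorem surjOn_sq (hP : IsTwistedSubgroup P) (hodd : Odd (Nat.card G)) :
    Set.SurjOn (· ^ 2) P P := by
  have hmaps : Set.MapsTo (· ^ 2) P P := fun x hx => by simpa [sq] using hP.2 x hx 1 hP.1
  have hcop : (Nat.card G).Coprime 2 := Nat.coprime_two_right.2 hodd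
  have hinj : Function.Injective (· ^ 2 : G → G) :=
    funext (powCoprime_apply hcop) ▸ (powCoprime hcop).injective
  rw [P.toFinite.surjOn_iff_bijOn_of_mapsTo hmaps]
  exact (P.toFinite.injOn_iff_bijOn_of_mapsTo hmaps).1 hinj.injOn

theorem orbit_one_eq (hP : IsTwistedSubgroup P) (hodd : Odd (Nat.card G)) :
    orbit (sandwichGroup P) (1 : G) = P := by
  ext x
  constructor
  · rintro ⟨γ, rfl⟩
    have h : (γ : G × G) • (1 : G) ∈ (γ : G × G) • P := Set.smul_mem_smul_set hP.1
    rwa [hP.smul_eq_of_mem_sandwichGroup γ.2] at h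
  · intro hx
    obtain ⟨r, hr, rfl⟩ := hP.surjOn_sq hodd hx
    refine ⟨⟨(r, r⁻¹), Subgroup.subset_closure ⟨r, hr, rfl⟩⟩, ?_⟩
    simp [Subgroup.smul_def, sandwich_smul, sq]

end IsTwistedSubgroup

end Sandwich

/-- If `G` is a finite group of odd order and `P ⊆ G` is a twisted subgroup,
then `|P|` divides `|G|`. -/
theorem twisted_subgroup_card_dvd {G : Type*} [Group G] [Fintype G]
    (hodd : Odd (Fintype.card G)) (P : Set G) (hP : IsTwistedSubgroup P) :
    P.ncard ∣ Fintype.card G := by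
  rw [← Nat.card_eq_fintype_card] at hodd ⊢
  rw [← hP.orbit_one_eq hodd]
  exact ncard_sandwich_orbit_one_dvd_card _ fun _ => swap_mem_sandwichGroup
end

section
/- Let G be a finite group of odd order and let B be a nonempty subset of G that is closed under betweenness. Then there exist g ∈ G and a twisted subgroup P of G such that B is the left coset g * P = {g * p : p ∈ P}. -/
/-- A subset `B` of a group `G` is *closed under betweenness* if whenever
`a, c ∈ B` and `b ∈ G` satisfies `a = b * c⁻¹ * b`, then `b ∈ B`. -/
def ClosedUnderBetweenness {G : Type*} [Group G] (B : Set G) : Prop :=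
  ∀ a ∈ B, ∀ c ∈ B, ∀ b : G, a = b * c⁻¹ * b → b ∈ B

/-- In a finite group of odd order, every nonempty subset closed under betweenness
is a left coset of a twisted subgroup. -/
theorem closedUnderBetweenness_eq_coset_of_twisted {G : Type*} [Group G] [Fintype G]
    (hodd : Odd (Fintype.card G)) (B : Set G) (hne : B.Nonempty)
    (hB : ClosedUnderBetweenness B) :
    ∃ (g : G) (P : Set G), IsTwistedSubgroup P ∧ B = (fun p => g * p) '' P := by
  have hcop : (Nat.card G).Coprime 2 := by
    rw [Nat.card_eq_fintype_card]
    rw [Nat.coprime_two_right]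
    exact hodd
  have hsq : Function.Bijective (fun x : G => x ^ 2) := by
    have := (powCoprime hcop).bijective
    simpa [powCoprime] using this
  -- reflection map φ_c : x ↦ x * c⁻¹ * x is bijective
  have hphi : ∀ c : G, Function.Bijective (fun x : G => x * c⁻¹ * x) := by
    intro c
    have h1 : (fun x : G => x * c⁻¹ * x) =
        (fun y : G => c * y) ∘ (fun y : G => y ^ 2) ∘ (fun x : G => c⁻¹ * x) := by
      funext x
      simp [pow_two]
      group
    rw [h1]
    exact ((Equiv.mulLeft c).bijective.comp hsq).comp (Equiv.mulLeft c⁻¹).bijective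
  -- B is closed under reflections
  have href : ∀ c ∈ B, ∀ b ∈ B, b * c⁻¹ * b ∈ B := by
    intro c hc
    have hsub : B ⊆ (fun x : G => x * c⁻¹ * x) '' B := by
      intro a ha
      obtain ⟨b, hb⟩ := (hphi c).surjective a
      exact ⟨b, hB a ha c hc b hb.symm, hb⟩
    have hfin : ((fun x : G => x * c⁻¹ * x) '' B).Finite := Set.toFinite _
    have hcard : ((fun x : G => x * c⁻¹ * x) '' B).ncard ≤ B.ncard := by
      rw [Set.ncard_image_of_injective B (hphi c).injective]
    have heq : B = (fun x : G => x * c⁻¹ * x) '' B :=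
      Set.eq_of_subset_of_ncard_le hsub hcard hfin
    intro b hb
    rw [heq]
    exact ⟨b, hb, rfl⟩
  obtain ⟨g, hg⟩ := hne
  refine ⟨g, (fun b => g⁻¹ * b) '' B, ⟨⟨g, hg, by simp⟩, ?_⟩, ?_⟩
  · rintro a ⟨x, hx, rfl⟩ b ⟨y, hy, rfl⟩
    refine ⟨x * (g * y⁻¹ * g)⁻¹ * x, href (g * y⁻¹ * g) (href y hy g hg) x hx, ?_⟩
    group
  · ext b
    constructor
    · intro hb
      exact ⟨g⁻¹ * b, ⟨b, hb, rfl⟩, by group⟩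
    · rintro ⟨_, ⟨x, hx, rfl⟩, rfl⟩
      simpa using hx
end

section
/- Let G be a finite group of odd order, let P be a twisted subgroup of G, and let g ∈ G. Then the left coset g * P = {g * p : p ∈ P} is closed under betweenness. -/
lemma twisted_even_pow_mem {G : Type*} [Group G] {P : Set G} (hP : IsTwistedSubgroup P)
    {a : G} (ha : a ∈ P) : ∀ j : ℕ, a ^ (2 * j) ∈ P := by
  intro j
  induction j with
  | zero => simpa using hP.1
  | succ n ih =>
      have h : a ^ (2 * (n + 1)) = a * a ^ (2 * n) * a := by
        rw [show 2 * (n + 1) = (2 * n + 1) + 1 by ring, pow_succ, pow_succ']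
      rw [h]
      exact hP.2 a ha _ ih

lemma twisted_pow_mem {G : Type*} [Group G] [Fintype G] (hodd : Odd (Fintype.card G))
    {P : Set G} (hP : IsTwistedSubgroup P) {a : G} (ha : a ∈ P) (n : ℕ) : a ^ n ∈ P := by
  have hdvd : orderOf a ∣ Fintype.card G := orderOf_dvd_card
  have hm : Odd (orderOf a) := by
    rcases Nat.even_or_odd (orderOf a) with he | ho
    · exfalso
      have : (2 : ℕ) ∣ Fintype.card G := dvd_trans he.two_dvd hdvd
      exact (Nat.not_even_iff_odd.mpr hodd) (even_iff_two_dvd.mpr this)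
    · exact ho
  obtain ⟨k, hk⟩ := hm
  have key : a ^ n = a ^ (2 * ((k + 1) * n)) := by
    have h1 : a ^ (2 * (k + 1)) = a := by
      have : 2 * (k + 1) = orderOf a + 1 := by omega
      rw [this, pow_succ, pow_orderOf_eq_one, one_mul]
    calc a ^ n = (a ^ (2 * (k + 1))) ^ n := by rw [h1]
      _ = a ^ (2 * ((k + 1) * n)) := by rw [← pow_mul]; ring_nf
  rw [key]
  exact twisted_even_pow_mem hP ha _

lemma twisted_inv_mem {G : Type*} [Group G] [Fintype G] (hodd : Odd (Fintype.card G))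
    {P : Set G} (hP : IsTwistedSubgroup P) {a : G} (ha : a ∈ P) : a⁻¹ ∈ P := by
  have h1 : 1 ≤ orderOf a := (orderOf_pos a)
  have h : a ^ (orderOf a - 1) * a = 1 := by
    rw [← pow_succ, Nat.sub_add_cancel h1, pow_orderOf_eq_one]
  rw [inv_eq_of_mul_eq_one_left h]
  exact twisted_pow_mem hodd hP ha _

lemma twisted_sqrt_mem {G : Type*} [Group G] [Fintype G] (hodd : Odd (Fintype.card G))
    {P : Set G} (hP : IsTwistedSubgroup P) {a : G} (ha : a * a ∈ P) : a ∈ P := by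
  have hdvd : orderOf a ∣ Fintype.card G := orderOf_dvd_card
  have hm : Odd (orderOf a) := by
    rcases Nat.even_or_odd (orderOf a) with he | ho
    · exfalso
      have : (2 : ℕ) ∣ Fintype.card G := dvd_trans he.two_dvd hdvd
      exact (Nat.not_even_iff_odd.mpr hodd) (even_iff_two_dvd.mpr this)
    · exact ho
  obtain ⟨k, hk⟩ := hm
  have key : a = (a * a) ^ (k + 1) := by
    rw [← sq, ← pow_mul]
    have : 2 * (k + 1) = orderOf a + 1 := by omega
    rw [this, pow_succ, pow_orderOf_eq_one, one_mul]
  rw [key]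
  exact twisted_pow_mem hodd hP ha _

/-- In a finite group of odd order, every left coset of a twisted subgroup
is closed under betweenness. -/
theorem coset_of_twisted_closedUnderBetweenness {G : Type*} [Group G] [Fintype G]
    (hodd : Odd (Fintype.card G)) (P : Set G) (hP : IsTwistedSubgroup P) (g : G) :
    ClosedUnderBetweenness ((fun p => g * p) '' P) := by
  rintro a ⟨p₁, hp1, rfl⟩ c ⟨p₂, hp2, rfl⟩ b heq
  simp only at heq
  set x := g⁻¹ * b with hxdef
  have hb : b = g * x := by rw [hxdef]; group
  have key : x * p₂⁻¹ * x = p₁ := by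
    apply mul_left_cancel (a := g)
    rw [heq, hb]
    group
  -- square root of p₂
  have hm : Odd (orderOf p₂) := by
    rcases Nat.even_or_odd (orderOf p₂) with he | ho
    · exfalso
      have : (2 : ℕ) ∣ Fintype.card G := dvd_trans he.two_dvd orderOf_dvd_card
      exact (Nat.not_even_iff_odd.mpr hodd) (even_iff_two_dvd.mpr this)
    · exact ho
  obtain ⟨k, hk⟩ := hm
  set s : G := p₂ ^ (k + 1) with hsdef
  have hss : s * s = p₂ := by
    rw [hsdef, ← pow_add]
    have : (k + 1) + (k + 1) = orderOf p₂ + 1 := by omega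
    rw [this, pow_succ, pow_orderOf_eq_one, one_mul]
  have hs : s ∈ P := twisted_pow_mem hodd hP hp2 _
  have hsi : s⁻¹ ∈ P := twisted_inv_mem hodd hP hs
  set u : G := s⁻¹ * x * s⁻¹ with hudef
  have huu : u * u = s⁻¹ * p₁ * s⁻¹ := by
    have hp2inv : p₂⁻¹ = s⁻¹ * s⁻¹ := by rw [← mul_inv_rev, hss]
    rw [hudef, ← key, hp2inv]
    group
  have huuP : u * u ∈ P := by rw [huu]; exact hP.2 _ hsi _ hp1
  have huP : u ∈ P := twisted_sqrt_mem hodd hP huuP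
  have hx : x ∈ P := by
    have : x = s * u * s := by rw [hudef]; group
    rw [this]
    exact hP.2 _ hs _ huP
  exact ⟨x, hx, by rw [hb]⟩
end

section
/- Let G be a finite group of odd order, let U be a subset of G that is closed under betweenness, and suppose c ∈ U and c * t ∈ U for some t ∈ G. Then c * t^j ∈ U for every integer j. -/
/-- In a finite group of odd order, if `U` is closed under betweenness and contains
`c` and `c * t`, then it contains `c * t ^ j` for every integer `j`. -/
theorem closedUnderBetweenness_powers {G : Type*} [Group G] [Fintype G]
    (hodd : Odd (Fintype.card G)) (U : Set G) (hU : ClosedUnderBetweenness U)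
    (c t : G) (hc : c ∈ U) (hct : c * t ∈ U) :
    ∀ j : ℤ, c * t ^ j ∈ U := by
  set n := orderOf t with hn
  have hn0 : 0 < n := orderOf_pos t
  have hpow : ∀ x y : ℤ, (n : ℤ) ∣ x - y → t ^ x = t ^ y := by
    intro x y hxy
    have h1 : t ^ (x - y) = 1 := orderOf_dvd_iff_zpow_eq_one.mp hxy
    rw [show x = y + (x - y) by ring, zpow_add, h1, mul_one]
  -- n is odd
  have hnodd : Odd n := by
    rcases hodd with ⟨r, hr⟩
    rcases orderOf_dvd_card (x := t) with ⟨s, hs⟩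
    rw [Nat.odd_iff] at *
    by_contra h
    have h2 : 2 ∣ n := by omega
    have : 2 ∣ Fintype.card G := h2.trans ⟨s, hs⟩
    omega
  obtain ⟨r, hr⟩ := hnodd
  -- k is an inverse of 2 mod n
  set k : ℤ := (r : ℤ) + 1 with hk
  have h2k : (n : ℤ) ∣ 2 * k - 1 := ⟨1, by push_cast [hr, hk]; ring⟩
  -- key: betweenness closure in exponents
  have hkey : ∀ a b m : ℤ, c * t ^ a ∈ U → c * t ^ b ∈ U →
      (n : ℤ) ∣ (a + b - 2 * m) → c * t ^ m ∈ U := by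
    intro a b m ha hb hdvd
    apply hU (c * t ^ a) ha (c * t ^ b) hb (c * t ^ m)
    have ht : t ^ a = t ^ (m - b + m) := hpow _ _ (by ring_nf; ring_nf at hdvd; convert hdvd using 1; ring)
    rw [ht]
    rw [zpow_add, zpow_sub]
    group
  have h0 : c * t ^ (0 : ℤ) ∈ U := by simpa using hc
  have h1 : c * t ^ (1 : ℤ) ∈ U := by simpa using hct
  -- closure under addition of exponents
  have hT : ∀ a b : ℤ, c * t ^ a ∈ U → c * t ^ b ∈ U → c * t ^ (a + b) ∈ U := by
    intro a b ha hb
    have h2 : ∀ i : ℕ, ∃ m : ℤ, (n : ℤ) ∣ (a + b - 2 ^ (i + 1) * m) ∧ c * t ^ m ∈ U := by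
      intro i
      induction i with
      | zero =>
        refine ⟨k * (a + b), ?_, ?_⟩
        · obtain ⟨s, hs⟩ := h2k
          exact ⟨-s * (a + b), by linear_combination (-(a : ℤ) - b) * hs⟩
        · apply hkey a b _ ha hb
          obtain ⟨s, hs⟩ := h2k
          exact ⟨-s * (a + b), by linear_combination (-(a : ℤ) - b) * hs⟩
      | succ i ih =>
        obtain ⟨m, hd, hm⟩ := ih
        refine ⟨k * m, ?_, ?_⟩
        · obtain ⟨s, hs⟩ := h2k
          obtain ⟨u, hu⟩ := hd
          exact ⟨u - 2 ^ (i + 1) * s * m, by linear_combination hu - (2:ℤ) ^ (i+1) * m * hs⟩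
        · apply hkey m 0 _ hm h0
          obtain ⟨s, hs⟩ := h2k
          exact ⟨-s * m, by linear_combination (-(m : ℤ)) * hs⟩
    -- use Euler's theorem: 2 ^ totient n ≡ 1 mod n
    have hcop : Nat.Coprime 2 n := by
      rw [Nat.Prime.coprime_iff_not_dvd Nat.prime_two]
      rintro ⟨s, hs⟩
      omega
    have heuler : 2 ^ Nat.totient n ≡ 1 [MOD n] := Nat.ModEq.pow_totient hcop
    have het : 1 ≤ Nat.totient n := Nat.totient_pos.mpr hn0
    have hdvdnat : n ∣ 2 ^ Nat.totient n - 1 :=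
      (Nat.modEq_iff_dvd' (Nat.one_le_two_pow)).mp heuler.symm
    have hdvdint : (n : ℤ) ∣ 2 ^ Nat.totient n - 1 := by
      have := Int.natCast_dvd_natCast.mpr hdvdnat
      rwa [Nat.cast_sub Nat.one_le_two_pow, Nat.cast_pow] at this
    obtain ⟨m, hd, hm⟩ := h2 (Nat.totient n - 1)
    have hexp : (Nat.totient n - 1) + 1 = Nat.totient n := by omega
    rw [hexp] at hd
    have : t ^ (a + b) = t ^ m := by
      apply hpow
      obtain ⟨u, hu⟩ := hd
      obtain ⟨v, hv⟩ := hdvdint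
      exact ⟨u + v * m, by linear_combination hu + m * hv⟩
    rw [this]
    exact hm
  -- all natural exponents
  have hnat : ∀ i : ℕ, c * t ^ (i : ℤ) ∈ U := by
    intro i
    induction i with
    | zero => simpa using h0
    | succ i ih => push_cast; exact hT i 1 ih h1
  -- all integer exponents
  intro j
  have hjm : (0 : ℤ) ≤ j % n := Int.emod_nonneg j (by exact_mod_cast hn0.ne')
  have : t ^ j = t ^ ((j % n).toNat : ℤ) := by
    apply hpow
    rw [Int.toNat_of_nonneg hjm]
    exact ⟨j / n, by rw [Int.emod_def]; ring⟩
  rw [this]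
  exact hnat _
end

section
/- Let G be a group, let P be a twisted subgroup of G, and let l be a finite list of elements of P. Then l.reverse.prod * l.prod ∈ P. In particular, if l.prod = 1 then l.reverse.prod ∈ P. -/
/-- If `P` is a twisted subgroup of `G` and `l` is a list of elements of `P`,
then `l.reverse.prod * l.prod ∈ P`; in particular if `l.prod = 1` then
`l.reverse.prod ∈ P`. -/
theorem reverse_prod_mul_prod_mem_twisted {G : Type*} [Group G] (P : Set G)
    (hP : IsTwistedSubgroup P) (l : List G) (hl : ∀ x ∈ l, x ∈ P) :
    l.reverse.prod * l.prod ∈ P ∧ (l.prod = 1 → l.reverse.prod ∈ P) := by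
  have key : l.reverse.prod * l.prod ∈ P := by
    induction l using List.reverseRecOn with
    | nil => simpa using hP.1
    | append_singleton l' a ih =>
      have ha : a ∈ P := hl a (by simp)
      have ih' := ih (fun x hx => hl x (by simp [hx]))
      have := hP.2 a ha _ ih'
      simpa [mul_assoc] using this
  refine ⟨key, fun h => ?_⟩
  simpa [h] using key
end

section
/- Let G be a finite group of odd order, let P be a twisted subgroup of G, and let H be a normal subgroup of G with H ⊆ P. Then for every h ∈ H and p ∈ P, h * p ∈ P (i.e., H * P = P). -/
/-- In a finite group of odd order, if `P` is a twisted subgroup and `H` is a normal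
subgroup contained in `P`, then `H * P = P`, i.e. `h * p ∈ P` for `h ∈ H`, `p ∈ P`. -/
theorem normal_mul_twisted_subset {G : Type*} [Group G] [Fintype G]
    (hodd : Odd (Fintype.card G)) (P : Set G) (hP : IsTwistedSubgroup P)
    (H : Subgroup G) [H.Normal] (hHP : (H : Set G) ⊆ P) :
    ∀ h ∈ H, ∀ p ∈ P, h * p ∈ P := by
  intro h hh p hp
  obtain ⟨k, hk⟩ := hodd
  set y : G := (h * p ^ 2) ^ (k + 1) with hy
  have hysq : y * y = h * p ^ 2 := by
    have : y * y = (h * p ^ 2) ^ (2 * k + 1) * (h * p ^ 2) := by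
      rw [hy, ← pow_add, ← pow_succ]
      ring_nf
    rw [this, ← hk, pow_card_eq_one, one_mul]
  set x : G := y * p⁻¹ with hx
  have hxH : x ∈ H := by
    rw [← QuotientGroup.eq_one_iff]
    have hmk : (QuotientGroup.mk x : G ⧸ H) =
        QuotientGroup.mk (p ^ (2 * (k + 1)) * p⁻¹) := by
      have h1 : (QuotientGroup.mk h : G ⧸ H) = 1 := (QuotientGroup.eq_one_iff h).2 hh
      simp only [hx, hy, QuotientGroup.mk_mul, QuotientGroup.mk_pow,
        QuotientGroup.mk_inv, h1, one_mul, ← pow_mul, mul_comm (2 : ℕ)]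
    rw [hmk]
    have : p ^ (2 * (k + 1)) * p⁻¹ = p ^ (2 * k + 1) := by
      have : 2 * (k + 1) = (2 * k + 1) + 1 := by ring
      rw [this, pow_succ, mul_inv_cancel_right]
    rw [this, ← hk]
    simp [pow_card_eq_one]
  have hxP : x ∈ P := hHP hxH
  have key : x * p * x = h * p := by
    have : x * p * x * p = h * p ^ 2 := by
      rw [hx]
      calc y * p⁻¹ * p * (y * p⁻¹) * p = y * y := by group
        _ = h * p ^ 2 := hysq
    have h2 : x * p * x = h * p ^ 2 * p⁻¹ := by
      rw [← this]; group
    rw [h2]; group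
  rw [← key]
  exact hP.2 x hxP p hp
end

section
/- Let G be a finite group of odd order and let P be a twisted subgroup of G. Then P is closed under square roots: if p ∈ P and q ∈ G satisfies q^2 = p, then q ∈ P. -/
/-- In a finite group of odd order, a twisted subgroup is closed under square roots:
if `p ∈ P` and `q ^ 2 = p`, then `q ∈ P`. -/
theorem twisted_subgroup_sqrt_mem {G : Type*} [Group G] [Fintype G]
    (hodd : Odd (Fintype.card G)) (P : Set G) (hP : IsTwistedSubgroup P)
    (p : G) (hp : p ∈ P) (q : G) (hq : q ^ 2 = p) :
    q ∈ P := by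
  obtain ⟨h1, hmul⟩ := hP
  -- all natural powers of p are in P
  have hpow : ∀ k : ℕ, p ^ k ∈ P := by
    intro k
    induction k using Nat.strong_induction_on with
    | _ k ih =>
      match k with
      | 0 => simpa using h1
      | 1 => simpa using hp
      | (k+2) =>
        have := hmul p hp (p ^ k) (ih k (by omega))
        have h : p * p ^ k * p = p ^ (k + 2) := by group
        rwa [h] at this
  obtain ⟨m, hm⟩ := hodd
  have hcard : q ^ Fintype.card G = 1 := pow_card_eq_one
  have hqp : q = p ^ (m + 1) := by
    calc q = q ^ (Fintype.card G + 1) := by rw [pow_succ, hcard, one_mul]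
    _ = (q ^ 2) ^ (m + 1) := by rw [← pow_mul, hm]; ring_nf
    _ = p ^ (m + 1) := by rw [hq]
  rw [hqp]; exact hpow _
end

section
/- Let G be a finite group of odd order and let ψ : G → G be a group automorphism with ψ ∘ ψ = id. Let N = { g ∈ G : ψ(g) = g } and P = { g ∈ G : ψ(g) = g⁻¹ }. Then every element g ∈ G can be written uniquely as g = n * p with n ∈ N and p ∈ P; that is, for each g ∈ G there exist unique n ∈ N and p ∈ P with g = n * p. -/
/-- Let `G` be a finite group of odd order and `ψ` an involutive automorphism of `G`.
With `N` the set of fixed points of `ψ` and `P` the set of elements inverted by `ψ`,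
every `g ∈ G` is uniquely expressible as `g = n * p` with `n ∈ N` and `p ∈ P`. -/
theorem unique_factorization_fixed_inverted {G : Type*} [Group G] [Fintype G]
    (hodd : Odd (Fintype.card G)) (ψ : G ≃* G) (hψ : ∀ g : G, ψ (ψ g) = g)
    (N P : Set G) (hN : N = {g : G | ψ g = g}) (hP : P = {g : G | ψ g = g⁻¹}) :
    ∀ g : G, ∃! np : G × G, np.1 ∈ N ∧ np.2 ∈ P ∧ g = np.1 * np.2 := by
  subst hN hP
  have hco : (Nat.card G).Coprime 2 := by
    rw [Nat.card_eq_fintype_card]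
    exact (Nat.prime_two.coprime_iff_not_dvd.mpr
      (Nat.two_dvd_ne_zero.mpr (Nat.odd_iff.mp hodd))).symm
  have hbij := hco.pow_left_bijective (G := G)
  have hinj : Function.Injective (fun x : G => x ^ 2) := hbij.1
  intro g
  obtain ⟨p, hp2⟩ := hbij.2 ((ψ g)⁻¹ * g)
  simp only at hp2
  have hpP : ψ p = p⁻¹ := hinj (show ψ p ^ 2 = p⁻¹ ^ 2 by
    rw [← map_pow, hp2, map_mul, map_inv, hψ, inv_pow, hp2, mul_inv_rev, inv_inv])
  have key : ψ g * (p * p) = g := by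
    rw [← pow_two, hp2]; group
  refine ⟨(g * p⁻¹, p), ⟨?_, hpP, by simp⟩, ?_⟩
  · show ψ (g * p⁻¹) = g * p⁻¹
    rw [map_mul, map_inv, hpP, inv_inv]
    conv_rhs => rw [← key]
    group
  · rintro ⟨n', p'⟩ ⟨hn', hp', hg⟩
    simp only [Set.mem_setOf_eq] at hn' hp'
    simp only at hg ⊢
    have hp'2 : p' ^ 2 = (ψ g)⁻¹ * g := by
      rw [hg, map_mul, hn', hp', pow_two]; group
    have hpe : p' = p := hinj (by simp only; rw [hp2, hp'2])
    have hne : n' = g * p⁻¹ := by rw [hg, hpe]; group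
    rw [Prod.mk.injEq]
    exact ⟨hne, hpe⟩
end

section
/- Let n ≥ 1 and let G be the dihedral group of order 2n (with rotations r^k, k ∈ ℤ/nℤ, and reflections). Fix a single reflection f. Then the set P = {f} ∪ { r^k : k ∈ ℤ/nℤ } is a twisted subgroup of G of cardinality n + 1. -/
/-- In the dihedral group of order `2n` (`n ≥ 1`), for any fixed reflection `sr i`,
the set consisting of that reflection together with all `n` rotations is a twisted
subgroup of cardinality `n + 1`. -/
theorem dihedral_reflection_rotations_twisted (n : ℕ) (hn : 1 ≤ n) (i : ZMod n) :
    IsTwistedSubgroup ({DihedralGroup.sr i} ∪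
        {x : DihedralGroup n | ∃ k : ZMod n, x = DihedralGroup.r k}) ∧
      ({DihedralGroup.sr i} ∪
        {x : DihedralGroup n | ∃ k : ZMod n, x = DihedralGroup.r k}).ncard = n + 1 := by
  have : NeZero n := ⟨by omega⟩
  constructor
  · constructor
    · right; exact ⟨0, DihedralGroup.one_def⟩
    · rintro a (rfl | ⟨ka, rfl⟩) b (rfl | ⟨kb, rfl⟩)
      · left
        simp [DihedralGroup.sr_mul_sr, DihedralGroup.r_mul_sr]
      · right
        exact ⟨-kb, by simp [DihedralGroup.sr_mul_r, DihedralGroup.sr_mul_sr]⟩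
      · left
        simp [DihedralGroup.r_mul_sr, DihedralGroup.sr_mul_r]
      · right
        exact ⟨ka + kb + ka, by simp [DihedralGroup.r_mul_r]⟩
  · have heq : {x : DihedralGroup n | ∃ k : ZMod n, x = DihedralGroup.r k} =
        Set.range DihedralGroup.r := by
      ext x; simp [Set.range, eq_comm]
    rw [heq, Set.union_comm, Set.union_singleton,
      Set.ncard_insert_of_notMem (by rintro ⟨k, h⟩; exact absurd h (by simp))
        (Set.finite_range _)]
    congr 1
    rw [Set.ncard_eq_toFinset_card', Set.toFinset_range]
    rw [Finset.card_image_of_injective _ (fun a b h => by injection h)]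
    simp [ZMod.card]
end

section
/- Let G be a finite group of odd order and let P be a twisted subgroup of G that generates G. Let H = { l.reverse.prod : l is a finite list of elements of P with l.prod = 1 }. Then H ⊆ P. -/
/-- In a finite group of odd order, if `P` is a generating twisted subgroup, then the
set `H` of reversed products of lists of elements of `P` whose product is `1` is
contained in `P`. -/
theorem reverse_prod_subset_twisted {G : Type*} [Group G] [Fintype G]
    (hodd : Odd (Fintype.card G)) (P : Set G) (hP : IsTwistedSubgroup P)
    (hgen : Subgroup.closure P = ⊤) (H : Set G)
    (hH : H = {g : G | ∃ l : List G, (∀ x ∈ l, x ∈ P) ∧ l.prod = 1 ∧ l.reverse.prod = g}) :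
    H ⊆ P := by
  have aux : ∀ l : List G, (∀ x ∈ l, x ∈ P) → l.reverse.prod * l.prod ∈ P := by
    intro l
    induction l using List.reverseRecOn with
    | nil => simpa using hP.1
    | append_singleton t a ih =>
      intro h
      have ha : a ∈ P := h a (by simp)
      have := hP.2 a ha _ (ih fun x hx => h x (by simp [hx]))
      simpa [List.prod_append, mul_assoc] using this
  subst hH
  rintro g ⟨l, hl, h1, h2⟩
  have := aux l hl
  rw [h1, mul_one, h2] at this
  exact this
end
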